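/- arXiv:1510.03033 — 5 statements merged into one kernel-verified Lean document; each statement's English description precedes it below -/
import Mathlib

section
/- For every composition I = (i_1, …, i_r) of n, the polynomial q ↦ n! · g_I(q)/(1−q)^r is a polynomial in q with nonnegative integer coefficients. -/
/-!
Read `G_J(q, t)` as a function of `(q, t)`; each step of its recursion multiplies by `t^(i-1)`
and then takes `∫_q^t`. By induction on `J` it has two expansions:
* a nonnegative combination of `q^a t^b (t - q)^ℓ(J)`, since
  `(k + m + 2) ∫_q^t s^(m+1) (s-q)^k = t^(m+1) (t-q)^(k+1) + (m+1) q ∫_q^t s^m (s-q)^k`;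
* an integer combination of `q^a (t - q)^m / m!` with `ℓ(J) ≤ m ≤ ΣJ`, since
  `t = q + (t - q)` and `∫_q^t (s-q)^m / m! = (t-q)^(m+1) / (m+1)!`.
At `t = 1` both write `n! g_I(q)` as `(1 - q)^r P(q)`, once with `P` having nonnegative real
coefficients and once with `P` having integer coefficients; cancelling `(1 - q)^r` shows that
these are the same polynomial.
-/

/-- `G q [i_k, …, i_1] t` is the iterated integral
`G_{(i_1,…,i_k)}(t) = ∫_q^t s^{i_k−1} G_{(i_1,…,i_{k−1})}(s) ds`
(the list argument is the composition read in reverse). -/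
noncomputable def G (q : ℝ) : List ℕ → ℝ → ℝ
  | [], _ => 1
  | i :: J, t => ∫ s in q..t, s ^ (i - 1) * G q J s

/-- The composition polynomial `g_I(q) = G_{(i_1,…,i_r)}(1)`. -/
noncomputable def g (q : ℝ) (I : List ℕ) : ℝ := G q I.reverse 1

open Polynomial intervalIntegral Submodule
open scoped NNReal Nat

namespace CompositionPolynomial

-- Functions `ℝ → ℝ → ℝ` are read as functions of `(q, t)`, with the pointwise algebra structure.
def varQ : ℝ → ℝ → ℝ := fun q _ => q

def varT : ℝ → ℝ → ℝ := fun _ t => t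

@[simp] lemma varQ_apply (q t : ℝ) : varQ q t = q := rfl

@[simp] lemma varT_apply (q t : ℝ) : varT q t = t := rfl

noncomputable def primitiveFrom (F : ℝ → ℝ → ℝ) : ℝ → ℝ → ℝ := fun q t => ∫ s in q..t, F q s

lemma G_cons (i : ℕ) (J : List ℕ) :
    (fun q t => G q (i :: J) t) = primitiveFrom (varT ^ (i - 1) * fun q t => G q J t) := rfl

lemma integral_sub_pow (q t : ℝ) (k : ℕ) :
    ∫ s in q..t, (s - q) ^ k = (t - q) ^ (k + 1) / (k + 1) := by
  simp [intervalIntegral.integral_comp_sub_right (· ^ k), integral_pow]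

lemma integral_pow_succ_mul_sub_pow (q t : ℝ) (m k : ℕ) :
    (k + m + 2 : ℝ) * ∫ s in q..t, s ^ (m + 1) * (s - q) ^ k
      = t ^ (m + 1) * (t - q) ^ (k + 1) + (m + 1) * q * ∫ s in q..t, s ^ m * (s - q) ^ k := by
  have hderiv : ∀ s, HasDerivAt (fun s => s ^ (m + 1) * (s - q) ^ (k + 1))
      ((k + m + 2) * (s ^ (m + 1) * (s - q) ^ k) - (m + 1) * q * (s ^ m * (s - q) ^ k)) s := by
    intro s
    refine ((hasDerivAt_pow (m + 1) s).fun_mul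
      (((hasDerivAt_id' s).sub_const q).fun_pow (k + 1))).congr_deriv ?_
    push_cast [add_tsub_cancel_right]
    ring
  have hftc := integral_eq_sub_of_hasDerivAt (fun s _ => hderiv s)
    (Continuous.intervalIntegrable (by fun_prop) q t)
  rw [integral_sub (by apply Continuous.intervalIntegrable; fun_prop)
    (by apply Continuous.intervalIntegrable; fun_prop), integral_const_mul,
    integral_const_mul] at hftc
  simp only [sub_self, zero_pow (Nat.succ_ne_zero k), mul_zero, sub_zero] at hftc
  linarith

section Span

variable {R : Type*} [CommSemiring R] [Algebra R ℝ] {S : Set (ℝ → ℝ → ℝ)}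

lemma smul_apply_apply (r : R) (F : ℝ → ℝ → ℝ) (q t : ℝ) :
    (r • F) q t = algebraMap R ℝ r * F q t := by
  rw [Pi.smul_apply, Pi.smul_apply, Algebra.smul_def]

lemma mul_mem_of_mem_span {M : Submodule R (ℝ → ℝ → ℝ)} {H F : ℝ → ℝ → ℝ}
    (hS : ∀ E ∈ S, H * E ∈ M) (hF : F ∈ span R S) : H * F ∈ M :=
  (map_span_le (LinearMap.mulLeft R H) S M).2 hS (mem_map_of_mem hF)

lemma primitiveFrom_mem_of_mem_span {M : Submodule R (ℝ → ℝ → ℝ)}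
    (hcont : ∀ E ∈ S, ∀ q, Continuous (E q)) (hS : ∀ E ∈ S, primitiveFrom E ∈ M)
    {F : ℝ → ℝ → ℝ} (hF : F ∈ span R S) : primitiveFrom F ∈ M := by
  suffices (∀ q, Continuous (F q)) ∧ primitiveFrom F ∈ M from this.2
  induction hF using span_induction with
  | mem E hE => exact ⟨hcont E hE, hS E hE⟩
  | zero =>
    refine ⟨fun _ => continuous_const, ?_⟩
    have : primitiveFrom 0 = 0 := by ext q t; simp [primitiveFrom]
    rw [this]
    exact M.zero_mem
  | add E F _ _ hE hF =>
    refine ⟨fun q => (hE.1 q).add (hF.1 q), ?_⟩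
    have : primitiveFrom (E + F) = primitiveFrom E + primitiveFrom F := by
      ext q t
      exact integral_add ((hE.1 q).intervalIntegrable q t) ((hF.1 q).intervalIntegrable q t)
    rw [this]
    exact M.add_mem hE.2 hF.2
  | smul r E _ hE =>
    have happly (q : ℝ) : (r • E) q = fun t => algebraMap R ℝ r * E q t :=
      funext (smul_apply_apply r E q)
    refine ⟨fun q => happly q ▸ (hE.1 q).const_mul _, ?_⟩
    have : primitiveFrom (r • E) = r • primitiveFrom E := by
      ext q t
      simp only [primitiveFrom, smul_apply_apply, integral_const_mul]
    rw [this]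
    exact M.smul_mem r hE.2

lemma exists_aeval_of_mem_span (c : ℝ) (k : ℕ)
    (hS : ∀ E ∈ S, ∃ P : R[X], ∀ q, c * E q 1 = (1 - q) ^ k * aeval q P)
    {F : ℝ → ℝ → ℝ} (hF : F ∈ span R S) :
    ∃ P : R[X], ∀ q, c * F q 1 = (1 - q) ^ k * aeval q P := by
  induction hF using span_induction with
  | mem E hE => exact hS E hE
  | zero => exact ⟨0, by simp⟩
  | add E F _ _ hE hF =>
    obtain ⟨P, hP⟩ := hE
    obtain ⟨Q, hQ⟩ := hF
    exact ⟨P + Q, fun q => by simp only [Pi.add_apply, map_add, mul_add, hP, hQ]⟩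
  | smul r E _ hE =>
    obtain ⟨P, hP⟩ := hE
    refine ⟨C r * P, fun q => ?_⟩
    rw [smul_apply_apply, map_mul, aeval_C, mul_left_comm, hP]
    ring

end Span

def nonnegCone (k : ℕ) : Submodule ℝ≥0 (ℝ → ℝ → ℝ) :=
  span ℝ≥0 (Set.range fun e : ℕ × ℕ => varQ ^ e.1 * varT ^ e.2 * (varT - varQ) ^ k)

lemma monomial_mem_nonnegCone (k a b : ℕ) :
    varQ ^ a * varT ^ b * (varT - varQ) ^ k ∈ nonnegCone k :=
  subset_span ⟨(a, b), rfl⟩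

lemma varT_pow_mul_mem_nonnegCone {k : ℕ} (j : ℕ) {F : ℝ → ℝ → ℝ} (hF : F ∈ nonnegCone k) :
    varT ^ j * F ∈ nonnegCone k := by
  refine mul_mem_of_mem_span ?_ hF
  rintro _ ⟨⟨a, b⟩, rfl⟩
  convert monomial_mem_nonnegCone k a (b + j) using 1
  ring

lemma primitiveFrom_monomial_mem_nonnegCone (k a m : ℕ) :
    primitiveFrom (varQ ^ a * varT ^ m * (varT - varQ) ^ k) ∈ nonnegCone (k + 1) := by
  induction m generalizing a with
  | zero =>
    convert (nonnegCone (k + 1)).smul_mem ((k + 1 : ℝ≥0)⁻¹) (monomial_mem_nonnegCone (k + 1) a 0)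
    ext q t
    simp only [primitiveFrom, Pi.smul_apply, Pi.mul_apply, Pi.pow_apply, Pi.sub_apply,
      varQ_apply, varT_apply, pow_zero, mul_one, NNReal.smul_def, smul_eq_mul, integral_const_mul,
      integral_sub_pow]
    push_cast
    ring
  | succ m ih =>
    have hrec : primitiveFrom (varQ ^ a * varT ^ (m + 1) * (varT - varQ) ^ k)
        = (k + m + 2 : ℝ≥0)⁻¹ • (varQ ^ a * varT ^ (m + 1) * (varT - varQ) ^ (k + 1))
          + ((m + 1) / (k + m + 2) : ℝ≥0) •
            primitiveFrom (varQ ^ (a + 1) * varT ^ m * (varT - varQ) ^ k) := by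
      ext q t
      have h := integral_pow_succ_mul_sub_pow q t m k
      simp only [primitiveFrom, Pi.add_apply, Pi.smul_apply, Pi.mul_apply, Pi.pow_apply,
        Pi.sub_apply, varQ_apply, varT_apply, NNReal.smul_def, smul_eq_mul, mul_assoc,
        integral_const_mul]
      push_cast
      field_simp
      linear_combination q ^ a * h
    rw [hrec]
    exact add_mem (smul_mem _ _ (monomial_mem_nonnegCone _ _ _)) (smul_mem _ _ (ih _))

lemma primitiveFrom_mem_nonnegCone {k : ℕ} {F : ℝ → ℝ → ℝ} (hF : F ∈ nonnegCone k) :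
    primitiveFrom F ∈ nonnegCone (k + 1) := by
  refine primitiveFrom_mem_of_mem_span ?_ ?_ hF
  · rintro _ ⟨⟨a, b⟩, rfl⟩ q
    change Continuous fun t => q ^ a * t ^ b * (t - q) ^ k
    fun_prop
  · rintro _ ⟨⟨a, b⟩, rfl⟩
    exact primitiveFrom_monomial_mem_nonnegCone k a b

lemma G_mem_nonnegCone (J : List ℕ) : (fun q t => G q J t) ∈ nonnegCone J.length := by
  induction J with
  | nil =>
    have h : (fun q t => G q [] t) = varQ ^ 0 * varT ^ 0 * (varT - varQ) ^ 0 := by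
      ext q t
      simp [G]
    exact h ▸ monomial_mem_nonnegCone 0 0 0
  | cons i J ih =>
    rw [G_cons]
    exact primitiveFrom_mem_nonnegCone (varT_pow_mul_mem_nonnegCone _ ih)

lemma exists_aeval_of_mem_nonnegCone {k : ℕ} {F : ℝ → ℝ → ℝ} (hF : F ∈ nonnegCone k) :
    ∃ V : ℝ≥0[X], ∀ q, F q 1 = (1 - q) ^ k * aeval q V := by
  simpa only [one_mul] using exists_aeval_of_mem_span 1 k (by
    rintro _ ⟨⟨a, b⟩, rfl⟩
    refine ⟨X ^ a, fun q => ?_⟩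
    simp only [Pi.mul_apply, Pi.pow_apply, Pi.sub_apply, varQ_apply, varT_apply, one_pow,
      map_pow, aeval_X]
    ring) hF

def factorialLattice (k N : ℕ) : Submodule ℤ (ℝ → ℝ → ℝ) :=
  span ℤ {F | ∃ a m, k ≤ m ∧ m ≤ N ∧ F = (m ! : ℝ)⁻¹ • (varQ ^ a * (varT - varQ) ^ m)}

lemma generator_mem_factorialLattice {k N m : ℕ} (a : ℕ) (hk : k ≤ m) (hN : m ≤ N) :
    (m ! : ℝ)⁻¹ • (varQ ^ a * (varT - varQ) ^ m) ∈ factorialLattice k N :=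
  subset_span ⟨a, m, hk, hN, rfl⟩

lemma varT_mul_mem_factorialLattice {k N : ℕ} {F : ℝ → ℝ → ℝ} (hF : F ∈ factorialLattice k N) :
    varT * F ∈ factorialLattice k (N + 1) := by
  refine mul_mem_of_mem_span ?_ hF
  rintro _ ⟨a, m, hk, hN, rfl⟩
  have hsplit : varT * ((m ! : ℝ)⁻¹ • (varQ ^ a * (varT - varQ) ^ m))
      = ((m ! : ℝ)⁻¹ • (varQ ^ (a + 1) * (varT - varQ) ^ m))
        + (m + 1 : ℤ) • (((m + 1)! : ℝ)⁻¹ • (varQ ^ a * (varT - varQ) ^ (m + 1))) := by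
    ext q t
    simp only [Pi.add_apply, Pi.smul_apply, Pi.mul_apply, Pi.pow_apply, Pi.sub_apply, varQ_apply,
      varT_apply, smul_eq_mul, zsmul_eq_mul, Pi.intCast_apply, Nat.factorial_succ]
    push_cast
    field_simp
    ring
  rw [hsplit]
  exact add_mem (generator_mem_factorialLattice _ hk (by omega))
    (smul_mem _ _ (generator_mem_factorialLattice _ (by omega) (by omega)))

lemma varT_pow_mul_mem_factorialLattice {k N : ℕ} (j : ℕ) {F : ℝ → ℝ → ℝ}
    (hF : F ∈ factorialLattice k N) : varT ^ j * F ∈ factorialLattice k (N + j) := by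
  induction j with
  | zero => simpa using hF
  | succ j ih => simpa [pow_succ', mul_assoc, ← add_assoc] using varT_mul_mem_factorialLattice ih

lemma primitiveFrom_mem_factorialLattice {k N : ℕ} {F : ℝ → ℝ → ℝ}
    (hF : F ∈ factorialLattice k N) : primitiveFrom F ∈ factorialLattice (k + 1) (N + 1) := by
  refine primitiveFrom_mem_of_mem_span ?_ ?_ hF
  · rintro _ ⟨a, m, -, -, rfl⟩ q
    change Continuous fun t => (m ! : ℝ)⁻¹ * (q ^ a * (t - q) ^ m)
    fun_prop
  · rintro _ ⟨a, m, hk, hN, rfl⟩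
    convert generator_mem_factorialLattice a (Nat.succ_le_succ hk) (Nat.succ_le_succ hN) using 1
    ext q t
    simp only [primitiveFrom, Pi.smul_apply, Pi.mul_apply, Pi.pow_apply, Pi.sub_apply, varQ_apply,
      varT_apply, smul_eq_mul, integral_const_mul, integral_sub_pow, Nat.factorial_succ]
    push_cast
    field_simp

lemma G_mem_factorialLattice (J : List ℕ) (hJ : ∀ i ∈ J, 0 < i) :
    (fun q t => G q J t) ∈ factorialLattice J.length J.sum := by
  induction J with
  | nil =>
    have h : (fun q t => G q [] t) = (0 ! : ℝ)⁻¹ • (varQ ^ 0 * (varT - varQ) ^ 0) := by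
      ext q t
      simp [G]
    exact h ▸ generator_mem_factorialLattice 0 le_rfl le_rfl
  | cons i J ih =>
    obtain ⟨j, rfl⟩ := Nat.exists_eq_add_one_of_ne_zero (hJ i List.mem_cons_self).ne'
    rw [G_cons, List.length_cons, List.sum_cons, add_comm (j + 1), ← add_assoc]
    exact primitiveFrom_mem_factorialLattice
      (varT_pow_mul_mem_factorialLattice j (ih fun i hi => hJ i (List.mem_cons_of_mem _ hi)))

lemma exists_aeval_of_mem_factorialLattice {k N n : ℕ} (hN : N ≤ n) {F : ℝ → ℝ → ℝ}
    (hF : F ∈ factorialLattice k N) : ∃ W : ℤ[X], ∀ q, n ! * F q 1 = (1 - q) ^ k * aeval q W := by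
  refine exists_aeval_of_mem_span _ k ?_ hF
  rintro _ ⟨a, m, hk, hm, rfl⟩
  obtain ⟨d, hd⟩ := Nat.factorial_dvd_factorial (hm.trans hN)
  refine ⟨C (d : ℤ) * X ^ a * (1 - X) ^ (m - k), fun q => ?_⟩
  simp only [Pi.smul_apply, Pi.mul_apply, Pi.pow_apply, Pi.sub_apply, varQ_apply, varT_apply,
    smul_eq_mul, hd, map_mul, map_pow, map_sub, map_one, aeval_C, aeval_X]
  rw [← pow_mul_pow_sub (1 - q) hk]
  push_cast
  field_simp

lemma eq_of_forall_one_sub_pow_mul_eval_eq {P Q : ℝ[X]} (k : ℕ)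
    (h : ∀ q, (1 - q) ^ k * P.eval q = (1 - q) ^ k * Q.eval q) : P = Q :=
  eq_of_infinite_eval_eq P Q <| (Set.finite_singleton 1).infinite_compl.mono fun q hq =>
    mul_left_cancel₀ (pow_ne_zero _ (sub_ne_zero.2 (Ne.symm hq))) (h q)

lemma exists_map_natCast_eq_of_map_intCast_eq (W : ℤ[X]) (V : ℝ≥0[X])
    (h : W.map (algebraMap ℤ ℝ) = V.map (algebraMap ℝ≥0 ℝ)) :
    ∃ p : ℕ[X], p.map (Nat.castRingHom ℝ) = W.map (algebraMap ℤ ℝ) := by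
  refine (mem_lifts _).1 ((lifts_iff_coeff_lifts _).2 fun j => ?_)
  have hcoeff : (W.coeff j : ℝ) = V.coeff j := by
    simpa [coeff_map] using congrArg (coeff · j) h
  have hnonneg : (0 : ℝ) ≤ W.coeff j := hcoeff ▸ (V.coeff j).2
  refine ⟨(W.coeff j).toNat, ?_⟩
  simp only [coeff_map, eq_natCast, eq_intCast]
  exact_mod_cast Int.toNat_of_nonneg (Int.cast_nonneg_iff.1 hnonneg)

end CompositionPolynomial

open CompositionPolynomial

theorem reduced_composition_polynomial_nonneg_integer_coeffs_general
    (n : ℕ) (I : List ℕ) (hpos : ∀ i ∈ I, 0 < i) (hsum : I.sum = n) :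
    ∃ p : Polynomial ℕ, ∀ q : ℝ,
      (Nat.factorial n : ℝ) * g q I =
        (1 - q) ^ I.length * Polynomial.eval q (p.map (Nat.castRingHom ℝ)) := by
  obtain ⟨V, hV⟩ := exists_aeval_of_mem_nonnegCone (G_mem_nonnegCone I.reverse)
  obtain ⟨W, hW⟩ := exists_aeval_of_mem_factorialLattice (n := n) (by simp [hsum])
    (G_mem_factorialLattice I.reverse (by simpa using hpos))
  rw [List.length_reverse] at hV hW
  have hWV : W.map (algebraMap ℤ ℝ) = (n ! • V).map (algebraMap ℝ≥0 ℝ) :=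
    eq_of_forall_one_sub_pow_mul_eval_eq I.length fun q => by
      rw [eval_map_algebraMap, eval_map_algebraMap, ← hW, hV, map_nsmul, nsmul_eq_mul]
      ring
  obtain ⟨p, hp⟩ := exists_map_natCast_eq_of_map_intCast_eq W _ hWV
  refine ⟨p, fun q => ?_⟩
  rw [hp, eval_map_algebraMap, ← hW, g]

/-- for every composition `I` of `n`, `n! · g_I(q)/(1−q)^{ℓ(I)}` is a
polynomial in `q` with nonnegative integer coefficients. -/
theorem reduced_composition_polynomial_nonneg_integer_coeffs
    (n : ℕ) (hn : 0 < n) (I : List ℕ) (hpos : ∀ i ∈ I, 0 < i) (hsum : I.sum = n) :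
    ∃ p : Polynomial ℕ, ∀ q : ℝ,
      (Nat.factorial n : ℝ) * g q I =
        (1 - q) ^ I.length * Polynomial.eval q (p.map (Nat.castRingHom ℝ)) :=
  reduced_composition_polynomial_nonneg_integer_coeffs_general n I hpos hsum
end

section
/- For every composition I = (i_1, …, i_r) of n, the polynomial g_I(q) is divisible by (1−q)^r in the polynomial ring ℚ[q]; that is, there is a polynomial f_I(q) ∈ ℚ[q] with g_I(q) = (1−q)^r f_I(q) for all q. -/
open Polynomial

namespace Polynomial

section Antideriv

variable {A : Type*} [CommRing A] [Algebra ℚ A]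

noncomputable def antideriv (p : A[X]) : A[X] :=
  p.sum fun n a => C (((n : ℚ) + 1)⁻¹ • a) * X ^ (n + 1)

theorem coeff_antideriv_zero (p : A[X]) : (antideriv p).coeff 0 = 0 := by
  simp [antideriv, Polynomial.sum_def]

theorem coeff_antideriv_succ (p : A[X]) (n : ℕ) :
    (antideriv p).coeff (n + 1) = ((n : ℚ) + 1)⁻¹ • p.coeff n := by
  simp only [antideriv, Polynomial.sum_def, finsetSum_coeff, coeff_C_mul_X_pow, add_left_inj,
    Finset.sum_ite_eq]
  split_ifs with h
  · rfl
  · rw [notMem_support_iff.mp h, smul_zero]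

theorem derivative_antideriv (p : A[X]) : derivative (antideriv p) = p := by
  ext n
  have hn : ((n : ℚ) + 1) ≠ 0 := by positivity
  have hcast : (n : A) + 1 = algebraMap ℚ A ((n : ℚ) + 1) := by simp
  rw [coeff_derivative, coeff_antideriv_succ, hcast, smul_mul_assoc, mul_comm, ← Algebra.smul_def,
    smul_smul, inv_mul_cancel₀ hn, one_smul]

theorem X_pow_succ_dvd_antideriv {p : A[X]} {k : ℕ} (h : X ^ k ∣ p) :
    X ^ (k + 1) ∣ antideriv p := by
  rw [X_pow_dvd_iff] at h ⊢
  rintro (_ | d) hd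
  · exact coeff_antideriv_zero p
  · rw [coeff_antideriv_succ, h d (by omega), smul_zero]

end Antideriv

theorem integral_eval_derivative (p : ℝ[X]) (a b : ℝ) :
    ∫ x in a..b, (derivative p).eval x = p.eval b - p.eval a :=
  intervalIntegral.integral_eq_sub_of_hasDerivAt (fun x _ => p.hasDerivAt x)
    (p.derivative.continuous.intervalIntegrable a b)

end Polynomial

/-- `shiftedG J` is `u ↦ G q J (q + u)` as a polynomial in `u` over `ℚ[q]`. -/
noncomputable def shiftedG : List ℕ → ℚ[X][X]
  | [] => 1
  | i :: J => antideriv ((X + C X) ^ (i - 1) * shiftedG J)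

theorem X_pow_length_dvd_shiftedG (J : List ℕ) : X ^ J.length ∣ shiftedG J := by
  induction J with
  | nil => simp
  | cons i J ih => exact X_pow_succ_dvd_antideriv (dvd_mul_of_dvd_right ih _)

theorem G_add_eq_eval_shiftedG (q : ℝ) (J : List ℕ) (u : ℝ) :
    G q J (q + u) = ((shiftedG J).map (eval₂RingHom (Rat.castHom ℝ) q)).eval u := by
  induction J generalizing u with
  | nil => simp [G, shiftedG]
  | cons i J ih =>
    set φ := eval₂RingHom (Rat.castHom ℝ) q
    have integrand (v : ℝ) : (q + v) ^ (i - 1) * G q J (q + v)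
        = (((X + C X) ^ (i - 1) * shiftedG J).map φ).eval v := by
      rw [ih, Polynomial.map_mul, Polynomial.map_pow, Polynomial.map_add, map_X, map_C, eval_mul,
        eval_pow, eval_add, eval_X, eval_C, coe_eval₂RingHom, eval₂_X, add_comm v]
    calc G q (i :: J) (q + u) = ∫ v in 0..u, (q + v) ^ (i - 1) * G q J (q + v) := by
          rw [G, intervalIntegral.integral_comp_add_left (fun s => s ^ (i - 1) * G q J s), add_zero]
      _ = ∫ v in 0..u, (derivative ((shiftedG (i :: J)).map φ)).eval v := by
          simp_rw [integrand, derivative_map, shiftedG, derivative_antideriv]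
      _ = _ := by
          rw [integral_eval_derivative, eval_zero_map, ← coeff_zero_eq_eval_zero, shiftedG,
            coeff_antideriv_zero, map_zero, sub_zero]

theorem composition_polynomial_divisible_general (I : List ℕ) :
    ∃ f : Polynomial ℚ, ∀ q : ℝ,
      g q I = (1 - q) ^ I.length * Polynomial.eval q (f.map (Rat.castHom ℝ)) := by
  obtain ⟨h, hh⟩ := X_pow_length_dvd_shiftedG I.reverse
  refine ⟨h.eval (1 - X), fun q => ?_⟩
  set φ := eval₂RingHom (Rat.castHom ℝ) q
  have hφ : φ (1 - X) = 1 - q := by simp [φ]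
  calc g q I = G q I.reverse (q + (1 - q)) := by rw [add_sub_cancel]; rfl
    _ = (1 - q) ^ I.length * (h.map φ).eval (φ (1 - X)) := by
      rw [G_add_eq_eval_shiftedG, hh, Polynomial.map_mul, eval_mul, Polynomial.map_pow, map_X,
        eval_pow, eval_X, List.length_reverse, hφ]
    _ = _ := by rw [eval_map_apply, eval_map, coe_eval₂RingHom]

/-- `g_I(q)` is divisible by `(1−q)^r` in `ℚ[q]`: there is `f_I ∈ ℚ[q]`
with `g_I(q) = (1−q)^r f_I(q)` for all `q`. -/
theorem composition_polynomial_divisible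
    (n : ℕ) (hn : 0 < n) (I : List ℕ) (hpos : ∀ i ∈ I, 0 < i) (hsum : I.sum = n) :
    ∃ f : Polynomial ℚ, ∀ q : ℝ,
      g q I = (1 - q) ^ I.length * Polynomial.eval q (f.map (Rat.castHom ℝ)) :=
  composition_polynomial_divisible_general I
end

section
/- For every composition I = (i_1, …, i_r) of n with r ≥ 2 and every real number q, the reduced polynomials P satisfy q · i_1 · P_I(q) + P_{(i_1+i_2, i_3, …, i_r)}(q) = i_1 · P_I(q) + (n!/(n−i_1)!) · q^{i_1} · P_{(i_2, …, i_r)}(q), where P_{(i_2,…,i_r)} is computed for the integer n − i_1. -/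
/-- `P_I(q) = m! · g_I(q)/(1−q)^{ℓ(I)}` for a composition `I` of `m`. -/
noncomputable def P (q : ℝ) (m : ℕ) (I : List ℕ) : ℝ :=
  (Nat.factorial m : ℝ) * g q I / (1 - q) ^ I.length

/-!
Splitting the innermost exponent `s^(i₁+i₂-1) = s^(i₂-1) · (i₁ · G_{(i₁)}(s) + q^{i₁})`, with
`i₁ · G_{(i₁)}(s) = s^{i₁} - q^{i₁}`, and using that the outer integrations are linear, gives
`g_{(i₁+i₂,i₃,…)} = i₁ · g_{(i₁,i₂,i₃,…)} + q^{i₁} · g_{(i₂,i₃,…)}`.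
Multiplying by `n!/(1-q)^{r-1}` yields the recursion; at `q = 1` both sides vanish because
division by zero gives zero.
-/

open intervalIntegral

theorem continuous_G (q : ℝ) (M : List ℕ) : Continuous (G q M) := by
  induction M with
  | nil => exact continuous_const
  | cons i M ih =>
    exact continuous_primitive
      (fun a b => ((continuous_pow _).mul ih).intervalIntegrable a b) q

theorem natCast_mul_G_singleton (q : ℝ) (i : ℕ) (s : ℝ) :
    (i : ℝ) * G q [i] s = s ^ i - q ^ i := by
  cases i with
  | zero => simp
  | succ k =>
    simp only [G, mul_one, Nat.add_sub_cancel, integral_pow]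
    push_cast
    field_simp

theorem G_cons_eq_linear_comb {q a b : ℝ} {i j k : ℕ} {M M₁ M₂ : List ℕ}
    (h : ∀ s, s ^ (i - 1) * G q M s =
      a * (s ^ (j - 1) * G q M₁ s) + b * (s ^ (k - 1) * G q M₂ s)) (t : ℝ) :
    G q (i :: M) t = a * G q (j :: M₁) t + b * G q (k :: M₂) t := by
  have hint : ∀ (l : ℕ) (N : List ℕ),
      IntervalIntegrable (fun s => s ^ (l - 1) * G q N s) MeasureTheory.volume q t :=
    fun l N => ((continuous_pow _).mul (continuous_G q N)).intervalIntegrable q t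
  simp only [G, funext h]
  rw [integral_add ((hint j M₁).const_mul a) ((hint k M₂).const_mul b),
    integral_const_mul, integral_const_mul]

theorem G_append_add (q : ℝ) {i₁ i₂ : ℕ} (h₂ : 0 < i₂) (L : List ℕ) (t : ℝ) :
    G q (L ++ [i₁ + i₂]) t = i₁ * G q (L ++ [i₂, i₁]) t + q ^ i₁ * G q (L ++ [i₂]) t := by
  induction L generalizing t with
  | nil =>
    refine G_cons_eq_linear_comb (fun s => ?_) t
    have hexp : i₁ + i₂ - 1 = (i₂ - 1) + i₁ := by omega
    calc s ^ (i₁ + i₂ - 1) * G q [] s = s ^ (i₂ - 1) * ((i₁ * G q [i₁] s) + q ^ i₁) := by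
          rw [natCast_mul_G_singleton, hexp, pow_add, G, mul_one, sub_add_cancel]
      _ = _ := by simp only [G]; ring
  | cons j L ih =>
    simp only [List.cons_append]
    exact G_cons_eq_linear_comb (fun s => by rw [ih s]; ring) t

theorem g_cons_add (q : ℝ) {i₁ i₂ : ℕ} (h₂ : 0 < i₂) (J : List ℕ) :
    g q ((i₁ + i₂) :: J) = i₁ * g q (i₁ :: i₂ :: J) + q ^ i₁ * g q (i₂ :: J) := by
  simpa [g, List.reverse_cons, List.append_assoc] using G_append_add q h₂ J.reverse 1

theorem reduced_composition_polynomial_recursion_general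
    (n i₁ i₂ : ℕ) (J : List ℕ) (h₂ : 0 < i₂) (q : ℝ) :
    q * i₁ * P q n (i₁ :: i₂ :: J) + P q n ((i₁ + i₂) :: J) =
      (i₁ : ℝ) * P q n (i₁ :: i₂ :: J) +
        (Nat.factorial n : ℝ) / (Nat.factorial (n - i₁) : ℝ) * q ^ i₁ *
          P q (n - i₁) (i₂ :: J) := by
  rcases eq_or_ne q 1 with rfl | hq
  · simp [P]
  have h1q : (1 : ℝ) - q ≠ 0 := sub_ne_zero.mpr hq.symm
  have hfac : (Nat.factorial (n - i₁) : ℝ) ≠ 0 := Nat.cast_ne_zero.mpr (Nat.factorial_ne_zero _)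
  simp only [P, List.length_cons]
  rw [g_cons_add q h₂ J]
  field_simp
  ring

/-- the recursion
`q·i₁·P_I(q) + P_{(i₁+i₂,i₃,…,i_r)}(q) = i₁·P_I(q) + (n!/(n−i₁)!)·q^{i₁}·P_{(i₂,…,i_r)}(q)`. -/
theorem reduced_composition_polynomial_recursion
    (n i₁ i₂ : ℕ) (J : List ℕ) (h₁ : 0 < i₁) (h₂ : 0 < i₂) (hJ : ∀ j ∈ J, 0 < j)
    (hsum : (i₁ :: i₂ :: J).sum = n) (q : ℝ) :
    q * i₁ * P q n (i₁ :: i₂ :: J) + P q n ((i₁ + i₂) :: J) =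
      (i₁ : ℝ) * P q n (i₁ :: i₂ :: J) +
        (Nat.factorial n : ℝ) / (Nat.factorial (n - i₁) : ℝ) * q ^ i₁ *
          P q (n - i₁) (i₂ :: J) :=
  reduced_composition_polynomial_recursion_general n i₁ i₂ J h₂ q
end

section
/- For a composition I of n, let Q_I(q) = Σ_π q^{sinv(π)}, the sum over all permutitions π of size n with c(π) = I. Then for every composition I = (i_1, …, i_r) of n with r ≥ 2, q · i_1 · Q_I(q) + Q_{(i_1+i_2, i_3, …, i_r)}(q) = i_1 · Q_I(q) + (n!/(n−i_1)!) · q^{i_1} · Q_{(i_2, …, i_r)}(q), where Q_{(i_2,…,i_r)} is the corresponding sum over permutitions of size n − i_1. -/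
/-- A permutition (set of lists) of size `n`, represented canonically: the list of
blocks, each block a nonempty list of distinct letters, the letters partitioning
`{1, …, n}`, and the blocks ordered by increasing value of their last letters. -/
def IsPermutition (n : ℕ) (L : List (List ℕ)) : Prop :=
  (∀ B ∈ L, B ≠ []) ∧ L.flatten.Nodup ∧
    (∀ x, x ∈ L.flatten ↔ 1 ≤ x ∧ x ≤ n) ∧
    List.Chain' (· < ·) (L.map fun B => B.getLastD 0)

/-- `c(π)`: the composition of `n` formed by the block sizes, blocks being ordered by
increasing last letter. -/
def shape (L : List (List ℕ)) : List ℕ := L.map List.length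

/-- `sinv(π)`: the number of letters strictly greater than the last letter of their block. -/
def sinv (L : List (List ℕ)) : ℕ :=
  (L.map fun B => B.countP fun x => decide (B.getLastD 0 < x)).sum

/-- `Q_I(q) = Σ_{c(π)=I} q^{sinv(π)}`, summed over permutitions of size `n`. -/
noncomputable def Q (q : ℝ) (n : ℕ) (I : List ℕ) : ℝ :=
  ∑ᶠ L ∈ {L : List (List ℕ) | IsPermutition n L ∧ shape L = I}, q ^ sinv L

/-!
Removing the first block of a permutition on `S` of shape `(i₁, i₂, …)` leaves a permutition `σ`
on `S \ T` for an `i₁`-set `T`, and the removed block is an ordering `u` of `T` whose last letter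
is smaller than the last letter `b` of the first block of `σ`. Prepending `u` to that block of `σ`
instead gives the permutitions of shape `(i₁ + i₂, …)`, now with no condition on `u`. For fixed
`T` and `σ` the orderings contribute `(i₁ - 1)! · ∑_{ℓ ∈ T, ℓ < b} q ^ #{x ∈ T | ℓ < x}` and
`i₁! · q ^ #{x ∈ T | b < x}` respectively, and these are tied by the telescoping identity
`(q - 1) · ∑_{ℓ ∈ T, ℓ < b} q ^ #{x ∈ T | ℓ < x} + q ^ #{x ∈ T | b < x} = q ^ #T`.
Finally `∑_σ q ^ sinv σ` depends only on `#(S \ T)` (standardize the letters), so summing over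
the `(n choose i₁)` sets `T` turns the factor `i₁!` into `n! / (n - i₁)!`.
-/

open Finset

namespace List

variable {α β : Type*} {l : List α}

theorem getLastD_eq_getLast (h : l ≠ []) (d : α) : l.getLastD d = l.getLast h := by
  rw [getLastD_eq_getLast?, getLast?_eq_some_getLast h, Option.getD_some]

theorem getLastD_mem (h : l ≠ []) (d : α) : l.getLastD d ∈ l :=
  getLastD_eq_getLast h d ▸ getLast_mem h

theorem getLastD_map_of_ne_nil (f : α → β) (h : l ≠ []) (d : β) (d' : α) :
    (l.map f).getLastD d = f (l.getLastD d') := by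
  rw [getLastD_eq_getLast (by simpa using h), getLast_map, getLastD_eq_getLast h]

theorem getLastD_append_of_ne_nil (l' : List α) (h : l ≠ []) (d : α) :
    (l' ++ l).getLastD d = l.getLastD d := by
  rw [getLastD_eq_getLast?, getLastD_eq_getLast?, getLast?_append_of_ne_nil l' h]

theorem splitLengths_map_length_flatten : ∀ L : List (List α),
    (L.map length).splitLengths L.flatten = L
  | [] => rfl
  | B :: L => by simp [splitLengths_map_length_flatten L]

theorem Nodup.countP_eq_card_filter [DecidableEq α] (h : l.Nodup) (p : α → Prop)
    [DecidablePred p] : l.countP p = #{x ∈ l.toFinset | p x} := by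
  rw [countP_eq_length_filter, ← toFinset_card_of_nodup (h.filter _), toFinset_filter]
  simp

end List

theorem sub_one_mul_sum_pow_card_gt_add_pow_card_gt {α R : Type*} [LinearOrder α] [CommRing R]
    (T : Finset α) {b : α} (hb : b ∉ T) (q : R) :
    (q - 1) * ∑ ℓ ∈ T with ℓ < b, q ^ #{x ∈ T | ℓ < x} + q ^ #{x ∈ T | b < x} = q ^ #T := by
  induction T using Finset.induction_on_min with
  | empty => simp
  | insert a s ha ih =>
    obtain ⟨hba, hbs⟩ : b ≠ a ∧ b ∉ s := by simpa using hb
    have has : a ∉ s := fun h => lt_irrefl a (ha a h)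
    rcases lt_or_gt_of_ne hba with hlt | hgt
    · rw [filter_insert, if_neg hlt.not_gt,
        filter_false_of_mem fun x hx => (hlt.trans (ha x hx)).not_gt, filter_insert, if_pos hlt,
        filter_true_of_mem fun x hx => hlt.trans (ha x hx)]
      simp
    · have hrank : ∀ ℓ ∈ s, {x ∈ insert a s | ℓ < x} = {x ∈ s | ℓ < x} := fun ℓ hℓ => by
        rw [filter_insert, if_neg (ha ℓ hℓ).not_gt]
      rw [filter_insert, if_pos hgt, sum_insert (by simp [has]), filter_insert,
        if_neg (lt_irrefl a), filter_true_of_mem ha,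
        sum_congr rfl fun ℓ hℓ => by rw [hrank ℓ (mem_filter.1 hℓ).1], filter_insert,
        if_neg hgt.not_gt, card_insert_of_notMem has, pow_succ]
      linear_combination ih hbs

section Orderings

variable {α : Type*}

def orderings (T : Finset α) : Finset (List α) := ⟨T.val.lists, Multiset.lists_nodup_finset T⟩

theorem card_orderings (T : Finset α) : #(orderings T) = (#T).factorial := by
  rw [orderings, card_mk, ← coe_toList T, Multiset.lists_coe, Multiset.coe_card,
    List.length_permutations, length_toList]

variable [DecidableEq α]

theorem mem_orderings {T : Finset α} {u : List α} :
    u ∈ orderings T ↔ u.Nodup ∧ u.toFinset = T := by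
  rw [orderings, mem_mk, Multiset.mem_lists_iff, Multiset.quot_mk_to_coe]
  constructor
  · intro h
    have hu : u.Nodup := Multiset.coe_nodup.1 (h ▸ T.nodup)
    exact ⟨hu, val_inj.1 (by rw [List.toFinset_val, h, List.dedup_eq_self.2 hu])⟩
  · rintro ⟨hu, rfl⟩
    rw [List.toFinset_val, List.dedup_eq_self.2 hu]

theorem filter_orderings_getLastD_eq {T : Finset α} {ℓ : α} (hℓ : ℓ ∈ T) (d : α) :
    {u ∈ orderings T | u.getLastD d = ℓ} =
      (orderings (T.erase ℓ)).map ⟨(· ++ [ℓ]), List.append_left_injective [ℓ]⟩ := by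
  ext u
  simp only [mem_filter, mem_orderings, mem_map, Function.Embedding.coeFn_mk]
  constructor
  · rintro ⟨⟨hu, rfl⟩, hlast⟩
    obtain rfl | ⟨v, x, rfl⟩ := List.eq_nil_or_concat u
    · simp at hℓ
    obtain ⟨hx, hv⟩ := (List.nodup_concat v x).1 hu
    rw [List.concat_eq_append] at hlast ⊢
    rw [List.getLastD_concat] at hlast
    subst hlast
    refine ⟨v, ⟨hv, ?_⟩, rfl⟩
    rw [List.toFinset_append]
    simp [hx]
  · rintro ⟨v, ⟨hv, hvT⟩, rfl⟩
    refine ⟨⟨?_, ?_⟩, List.getLastD_concat ..⟩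
    · rw [← List.concat_eq_append, List.nodup_concat]
      exact ⟨by simp [← List.mem_toFinset, hvT], hv⟩
    · rw [List.toFinset_append, hvT]
      simp [hℓ]

theorem sum_orderings_getLastD {M : Type*} [AddCommMonoid M] {T : Finset α} (hT : T.Nonempty)
    (d : α) (g : α → M) :
    ∑ u ∈ orderings T, g (u.getLastD d) = (#T - 1).factorial • ∑ ℓ ∈ T, g ℓ := by
  rw [← sum_fiberwise_of_maps_to (g := fun u => u.getLastD d) (t := T), smul_sum]
  · refine sum_congr rfl fun ℓ hℓ => ?_
    rw [sum_congr rfl fun u hu => by rw [(mem_filter.1 hu).2], sum_const,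
      filter_orderings_getLastD_eq hℓ, card_map, card_orderings, card_erase_of_mem hℓ]
  · intro u hu
    obtain ⟨-, rfl⟩ := mem_orderings.1 hu
    have hne : u ≠ [] := by rintro rfl; simp at hT
    exact List.mem_toFinset.2 (List.getLastD_mem hne d)

end Orderings

theorem sinv_cons (B : List ℕ) (L : List (List ℕ)) :
    sinv (B :: L) = B.countP (B.getLastD 0 < ·) + sinv L := by
  simp [sinv]

theorem exists_eq_cons_of_shape_eq_cons {L : List (List ℕ)} {k : ℕ} {K : List ℕ}
    (h : shape L = k :: K) : ∃ C L', L = C :: L' ∧ C.length = k ∧ shape L' = K := by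
  cases L with
  | nil => simp [shape] at h
  | cons C L' => simp_all [shape]

theorem exists_eq_append_cons_of_shape_eq_add_cons {L : List (List ℕ)} {k l : ℕ} {K : List ℕ}
    (h : shape L = (k + l) :: K) :
    ∃ u C L', L = (u ++ C) :: L' ∧ u.length = k ∧ C.length = l ∧ shape L' = K := by
  obtain ⟨B, L', rfl, hB, hK⟩ := exists_eq_cons_of_shape_eq_cons h
  exact ⟨B.take k, B.drop k, L', by rw [List.take_append_drop], by simp [hB], by simp [hB], hK⟩

def headLast (L : List (List ℕ)) : ℕ := L.headI.getLastD 0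

structure IsPermutitionOn (S : Finset ℕ) (L : List (List ℕ)) : Prop where
  ne_nil : ∀ B ∈ L, B ≠ []
  nodup : L.flatten.Nodup
  mem_flatten : ∀ x, x ∈ L.flatten ↔ x ∈ S
  isChain : (L.map fun B => B.getLastD 0).IsChain (· < ·)

theorem isPermutition_iff_isPermutitionOn {n : ℕ} {L : List (List ℕ)} :
    IsPermutition n L ↔ IsPermutitionOn (Icc 1 n) L :=
  ⟨fun ⟨h₁, h₂, h₃, h₄⟩ => ⟨h₁, h₂, by simpa using h₃, h₄⟩,
    fun ⟨h₁, h₂, h₃, h₄⟩ => ⟨h₁, h₂, by simpa using h₃, h₄⟩⟩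

namespace IsPermutitionOn

variable {S : Finset ℕ} {B C : List ℕ} {L : List (List ℕ)}

theorem cons_iff :
    IsPermutitionOn S (B :: L) ↔ B ≠ [] ∧ B.Nodup ∧ B.toFinset ⊆ S ∧
      IsPermutitionOn (S \ B.toFinset) L ∧
      (B.getLastD 0 :: L.map fun C => C.getLastD 0).IsChain (· < ·) := by
  constructor
  · intro h
    obtain ⟨hB, hL, hdisj⟩ := List.nodup_append.1 (List.flatten_cons ▸ h.nodup)
    have hmem : ∀ x, x ∈ B ∨ x ∈ L.flatten ↔ x ∈ S := by
      simpa only [List.flatten_cons, List.mem_append] using h.mem_flatten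
    refine ⟨h.ne_nil B List.mem_cons_self, hB, fun x hx => (hmem x).1 (.inl (by simpa using hx)),
      ⟨fun C hC => h.ne_nil C (List.mem_cons_of_mem _ hC), hL, fun x => ?_, h.isChain.tail⟩,
      h.isChain⟩
    simp only [mem_sdiff, List.mem_toFinset, ← hmem]
    exact ⟨fun hx => ⟨.inr hx, fun hxB => hdisj x hxB x hx rfl⟩,
      fun ⟨hx, hxB⟩ => hx.resolve_left hxB⟩
  · rintro ⟨hB, hBn, hBS, hL, hc⟩
    have hmem := hL.mem_flatten
    simp only [mem_sdiff, List.mem_toFinset] at hmem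
    refine ⟨?_, ?_, fun x => ?_, hc⟩
    · simpa [hB] using hL.ne_nil
    · exact List.nodup_append.2
        ⟨hBn, hL.nodup, fun a ha b hb hab => ((hmem b).1 hb).2 (hab ▸ ha)⟩
    · have hBS := @hBS x
      simp only [List.mem_toFinset] at hBS
      simp only [List.flatten_cons, List.mem_append, hmem]
      tauto

theorem cons_cons_iff :
    IsPermutitionOn S (B :: C :: L) ↔ B ≠ [] ∧ B.Nodup ∧ B.toFinset ⊆ S ∧
      IsPermutitionOn (S \ B.toFinset) (C :: L) ∧ B.getLastD 0 < C.getLastD 0 := by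
  rw [cons_iff, List.map_cons, List.isChain_cons_cons]
  exact ⟨fun ⟨hB, hBn, hBS, hL, hlt, _⟩ => ⟨hB, hBn, hBS, hL, hlt⟩,
    fun ⟨hB, hBn, hBS, hL, hlt⟩ => ⟨hB, hBn, hBS, hL, hlt, by simpa using hL.isChain⟩⟩

theorem cons_append_iff {u : List ℕ} (hC : C ≠ []) :
    IsPermutitionOn S ((u ++ C) :: L) ↔
      u.Nodup ∧ u.toFinset ⊆ S ∧ IsPermutitionOn (S \ u.toFinset) (C :: L) := by
  rw [cons_iff, cons_iff, List.getLastD_append_of_ne_nil u hC, List.toFinset_append,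
    sdiff_sdiff_left, List.nodup_append', subset_sdiff, union_subset_iff,
    List.disjoint_toFinset_iff_disjoint, List.disjoint_comm (l₁ := C)]
  simp only [ne_eq, List.append_eq_nil_iff, hC, and_false, not_false_eq_true, true_and]
  tauto

theorem headLast_mem (hL : IsPermutitionOn S L) (hne : L ≠ []) : headLast L ∈ S := by
  obtain ⟨C, L, rfl⟩ := List.exists_cons_of_ne_nil hne
  exact (hL.mem_flatten _).1 (List.mem_flatten.2
    ⟨C, List.mem_cons_self, List.getLastD_mem (hL.ne_nil C List.mem_cons_self) 0⟩)

theorem map {f : ℕ → ℕ} (hf : StrictMonoOn f S) (hL : IsPermutitionOn S L) :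
    IsPermutitionOn (S.image f) (L.map (List.map f)) where
  ne_nil := by simpa using hL.ne_nil
  nodup := by
    rw [← List.map_flatten]
    refine hL.nodup.map_on fun x hx y hy => hf.injOn ?_ ?_ <;> simp [← hL.mem_flatten, *]
  mem_flatten x := by simp [← List.map_flatten, hL.mem_flatten]
  isChain := by
    have hlast : ∀ c ∈ L.map fun B => B.getLastD 0, c ∈ (S : Set ℕ) := by
      simp only [List.mem_map, forall_exists_index, and_imp, forall_apply_eq_imp_iff₂]
      exact fun B hB => (hL.mem_flatten _).1
        (List.mem_flatten.2 ⟨B, hB, List.getLastD_mem (hL.ne_nil B hB) 0⟩)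
    have hmap : (L.map (List.map f)).map (fun B => B.getLastD 0) =
        (L.map fun B => B.getLastD 0).map f := by
      simp only [List.map_map]
      exact List.map_congr_left fun B hB => List.getLastD_map_of_ne_nil f (hL.ne_nil B hB) 0 0
    rw [hmap, List.isChain_map]
    exact hL.isChain.imp_of_mem_imp fun a b ha hb => hf (hlast a ha) (hlast b hb)

theorem sinv_map {f : ℕ → ℕ} (hf : StrictMonoOn f S) (hL : IsPermutitionOn S L) :
    sinv (L.map (List.map f)) = sinv L := by
  rw [sinv, sinv, List.map_map]
  congr 1
  refine List.map_congr_left fun B hB => ?_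
  have hmem : ∀ x ∈ B, x ∈ S := fun x hx =>
    (hL.mem_flatten x).1 (List.mem_flatten.2 ⟨B, hB, hx⟩)
  rw [Function.comp_apply, List.getLastD_map_of_ne_nil f (hL.ne_nil B hB) 0 0, List.countP_map]
  refine List.countP_congr fun x hx => ?_
  simp only [Function.comp_apply, decide_eq_true_eq]
  rw [hf.lt_iff_lt (hmem _ (List.getLastD_mem (hL.ne_nil B hB) 0)) (hmem x hx)]

end IsPermutitionOn

theorem finite_setOf_isPermutitionOn (S : Finset ℕ) (K : List ℕ) :
    {L | IsPermutitionOn S L ∧ shape L = K}.Finite := by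
  refine ((orderings S).image K.splitLengths).finite_toSet.subset fun L ⟨hL, hK⟩ => ?_
  refine mem_image.2 ⟨L.flatten, mem_orderings.2 ⟨hL.nodup, ?_⟩, ?_⟩
  · ext x
    simp [hL.mem_flatten]
  · rw [← hK, shape, List.splitLengths_map_length_flatten]

noncomputable def permutitionsOn (S : Finset ℕ) (K : List ℕ) : Finset (List (List ℕ)) :=
  (finite_setOf_isPermutitionOn S K).toFinset

theorem mem_permutitionsOn {S : Finset ℕ} {K : List ℕ} {L : List (List ℕ)} :
    L ∈ permutitionsOn S K ↔ IsPermutitionOn S L ∧ shape L = K :=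
  Set.Finite.mem_toFinset _

section GeneratingSums

variable {R : Type*} [CommSemiring R]

noncomputable def QOn (q : R) (S : Finset ℕ) (K : List ℕ) : R :=
  ∑ L ∈ permutitionsOn S K, q ^ sinv L

theorem Q_eq_QOn (q : ℝ) (n : ℕ) (I : List ℕ) : Q q n I = QOn q (Icc 1 n) I := by
  have hset : {L | IsPermutition n L ∧ shape L = I} = ↑(permutitionsOn (Icc 1 n) I) := by
    ext L
    simp [mem_permutitionsOn, isPermutition_iff_isPermutitionOn]
  rw [Q, QOn, hset, finsum_mem_coe_finset]

section Relabel

variable {S S' : Finset ℕ}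

noncomputable def extendOrderIso (e : S ≃o S') (x : ℕ) : ℕ :=
  if hx : x ∈ S then e ⟨x, hx⟩ else 0

theorem extendOrderIso_of_mem (e : S ≃o S') {x : ℕ} (hx : x ∈ S) :
    extendOrderIso e x = e ⟨x, hx⟩ :=
  dif_pos hx

theorem strictMonoOn_extendOrderIso (e : S ≃o S') : StrictMonoOn (extendOrderIso e) S :=
  fun x hx y hy hxy => by
    rw [extendOrderIso_of_mem e hx, extendOrderIso_of_mem e hy]
    exact e.strictMono (show (⟨x, hx⟩ : S) < ⟨y, hy⟩ from hxy)

theorem image_extendOrderIso (e : S ≃o S') : S.image (extendOrderIso e) = S' := by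
  ext y
  simp only [mem_image]
  refine ⟨fun ⟨x, hx, hxy⟩ => hxy ▸ extendOrderIso_of_mem e hx ▸ (e ⟨x, hx⟩).2, fun hy => ?_⟩
  refine ⟨e.symm ⟨y, hy⟩, (e.symm ⟨y, hy⟩).2, ?_⟩
  rw [extendOrderIso_of_mem e (e.symm ⟨y, hy⟩).2]
  simp

theorem extendOrderIso_symm_extendOrderIso (e : S ≃o S') {x : ℕ} (hx : x ∈ S) :
    extendOrderIso e.symm (extendOrderIso e x) = x := by
  rw [extendOrderIso_of_mem e hx, extendOrderIso_of_mem e.symm (e ⟨x, hx⟩).2]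
  simp

theorem map_extendOrderIso_symm_map_extendOrderIso (e : S ≃o S') {L : List (List ℕ)}
    (hL : IsPermutitionOn S L) :
    (L.map (List.map (extendOrderIso e))).map (List.map (extendOrderIso e.symm)) = L := by
  rw [List.map_map]
  refine (List.map_congr_left fun B hB => ?_).trans L.map_id
  rw [Function.comp_apply, List.map_map, id]
  refine (List.map_congr_left fun x hx => ?_).trans B.map_id
  exact extendOrderIso_symm_extendOrderIso e
    ((hL.mem_flatten x).1 (List.mem_flatten.2 ⟨B, hB, hx⟩))

theorem map_extendOrderIso_mem_permutitionsOn (e : S ≃o S') {K : List ℕ} {L : List (List ℕ)}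
    (hL : L ∈ permutitionsOn S K) : L.map (List.map (extendOrderIso e)) ∈ permutitionsOn S' K := by
  obtain ⟨hL, hK⟩ := mem_permutitionsOn.1 hL
  have hmap := hL.map (strictMonoOn_extendOrderIso e)
  rw [image_extendOrderIso] at hmap
  exact mem_permutitionsOn.2 ⟨hmap, by simpa [shape, Function.comp_def] using hK⟩

theorem QOn_congr_orderIso (q : R) (e : S ≃o S') (K : List ℕ) : QOn q S K = QOn q S' K :=
  sum_nbij' (List.map (List.map (extendOrderIso e))) (List.map (List.map (extendOrderIso e.symm)))
    (fun _ => map_extendOrderIso_mem_permutitionsOn e)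
    (fun _ => map_extendOrderIso_mem_permutitionsOn e.symm)
    (fun _ hL => map_extendOrderIso_symm_map_extendOrderIso e (mem_permutitionsOn.1 hL).1)
    (fun _ hL => map_extendOrderIso_symm_map_extendOrderIso e.symm (mem_permutitionsOn.1 hL).1)
    (fun _ hL => by rw [(mem_permutitionsOn.1 hL).1.sinv_map (strictMonoOn_extendOrderIso e)])

theorem QOn_congr_card (q : R) (h : #S = #S') (K : List ℕ) : QOn q S K = QOn q S' K :=
  QOn_congr_orderIso q ((S.orderIsoOfFin h).symm.trans (S'.orderIsoOfFin rfl)) K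

end Relabel

theorem sum_powersetCard_QOn_sdiff (q : R) (S : Finset ℕ) (k : ℕ) (K : List ℕ) :
    ∑ T ∈ S.powersetCard k, QOn q (S \ T) K = (#S).choose k * QOn q (Icc 1 (#S - k)) K := by
  rw [← card_powersetCard, ← nsmul_eq_mul, ← sum_const]
  refine sum_congr rfl fun T hT => QOn_congr_card q ?_ K
  obtain ⟨hTS, hT⟩ := mem_powersetCard.1 hT
  rw [card_sdiff_of_subset hTS, hT, Nat.card_Icc, Nat.add_sub_cancel]

/-- The ordering `u` of `T` is put back either as a new block in front of `σ` or at the front of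
the first block of `σ`. -/
noncomputable def tailSplits (S : Finset ℕ) (k : ℕ) (K : List ℕ) :
    Finset ((_ : Finset ℕ) × List (List ℕ) × List ℕ) :=
  (S.powersetCard k).sigma fun T => permutitionsOn (S \ T) K ×ˢ orderings T

theorem mem_tailSplits {S : Finset ℕ} {k : ℕ} {K : List ℕ} {T : Finset ℕ}
    {σ : List (List ℕ)} {u : List ℕ} :
    ⟨T, σ, u⟩ ∈ tailSplits S k K ↔ T ⊆ S ∧ #T = k ∧ IsPermutitionOn (S \ T) σ ∧
      shape σ = K ∧ u.Nodup ∧ u.toFinset = T := by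
  simp [tailSplits, mem_permutitionsOn, mem_orderings, and_assoc]

theorem QOn_cons_cons_eq_sum_tailSplits (q : R) (S : Finset ℕ) {i₁ : ℕ} (hi : 0 < i₁) (i₂ : ℕ)
    (J : List ℕ) :
    QOn q S (i₁ :: i₂ :: J) = ∑ x ∈ tailSplits S i₁ (i₂ :: J) with
      x.2.2.getLastD 0 < headLast x.2.1,
        q ^ #{y ∈ x.1 | x.2.2.getLastD 0 < y} * q ^ sinv x.2.1 := by
  refine sum_nbij' (fun L => ⟨L.headI.toFinset, L.tail, L.headI⟩) (fun x => x.2.2 :: x.2.1)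
    (fun L hL => ?_) (fun x hx => ?_) (fun L hL => ?_) (fun x hx => ?_) (fun L hL => ?_)
  · obtain ⟨hL, hK⟩ := mem_permutitionsOn.1 hL
    obtain ⟨B, L', rfl, hB, hK'⟩ := exists_eq_cons_of_shape_eq_cons hK
    obtain ⟨C, L'', rfl, -, -⟩ := exists_eq_cons_of_shape_eq_cons hK'
    obtain ⟨-, hBn, hBS, hL', hlt⟩ := IsPermutitionOn.cons_cons_iff.1 hL
    simp only [mem_filter, mem_tailSplits, List.headI_cons, List.tail_cons, and_true]
    exact ⟨⟨hBS, by rw [List.toFinset_card_of_nodup hBn, hB], hL', hK', hBn⟩, hlt⟩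
  · obtain ⟨T, σ, u⟩ := x
    obtain ⟨hmem, hlt⟩ := mem_filter.1 hx
    obtain ⟨hTS, hT, hσ, hK, hun, rfl⟩ := mem_tailSplits.1 hmem
    obtain ⟨C, L', rfl, -, -⟩ := exists_eq_cons_of_shape_eq_cons hK
    have hune : u ≠ [] := by
      rintro rfl
      simp at hT
      omega
    refine mem_permutitionsOn.2 ⟨IsPermutitionOn.cons_cons_iff.2 ⟨hune, hun, hTS, hσ, hlt⟩, ?_⟩
    simpa [shape, ← hT, List.toFinset_card_of_nodup hun] using hK
  · obtain ⟨B, L', rfl, -, -⟩ := exists_eq_cons_of_shape_eq_cons (mem_permutitionsOn.1 hL).2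
    rfl
  · obtain ⟨T, σ, u⟩ := x
    obtain ⟨-, -, -, -, -, rfl⟩ := mem_tailSplits.1 (mem_filter.1 hx).1
    rfl
  · obtain ⟨hL, hK⟩ := mem_permutitionsOn.1 hL
    obtain ⟨B, L', rfl, -, -⟩ := exists_eq_cons_of_shape_eq_cons hK
    rw [sinv_cons, pow_add, (IsPermutitionOn.cons_iff.1 hL).2.1.countP_eq_card_filter]
    rfl

theorem QOn_add_cons_eq_sum_tailSplits (q : R) (S : Finset ℕ) (i₁ : ℕ) {i₂ : ℕ} (hi₂ : 0 < i₂)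
    (J : List ℕ) :
    QOn q S ((i₁ + i₂) :: J) = ∑ x ∈ tailSplits S i₁ (i₂ :: J),
      q ^ #{y ∈ x.1 | headLast x.2.1 < y} * q ^ sinv x.2.1 := by
  refine sum_nbij'
    (fun L => ⟨(L.headI.take i₁).toFinset, L.headI.drop i₁ :: L.tail, L.headI.take i₁⟩)
    (fun x => (x.2.2 ++ x.2.1.headI) :: x.2.1.tail)
    (fun L hL => ?_) (fun x hx => ?_) (fun L hL => ?_) (fun x hx => ?_) (fun L hL => ?_)
  · obtain ⟨hL, hK⟩ := mem_permutitionsOn.1 hL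
    obtain ⟨u, C, L', rfl, hu, hC, hK'⟩ := exists_eq_append_cons_of_shape_eq_add_cons hK
    obtain ⟨hun, huS, hL'⟩ :=
      (IsPermutitionOn.cons_append_iff (List.ne_nil_of_length_pos (hC ▸ hi₂))).1 hL
    simp only [mem_tailSplits, List.headI_cons, List.tail_cons, List.take_left' hu,
      List.drop_left' hu, and_true]
    exact ⟨huS, by rw [List.toFinset_card_of_nodup hun, hu], hL',
      by simpa [shape, hC] using hK', hun⟩
  · obtain ⟨T, σ, u⟩ := x
    obtain ⟨hTS, hT, hσ, hK, hun, rfl⟩ := mem_tailSplits.1 hx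
    obtain ⟨C, L', rfl, hC, hK'⟩ := exists_eq_cons_of_shape_eq_cons hK
    refine mem_permutitionsOn.2 ⟨(IsPermutitionOn.cons_append_iff
      (List.ne_nil_of_length_pos (hC ▸ hi₂))).2 ⟨hun, hTS, hσ⟩, ?_⟩
    simpa [shape, hC, ← hT, List.toFinset_card_of_nodup hun] using hK'
  · obtain ⟨u, C, L', rfl, hu, -, -⟩ :=
      exists_eq_append_cons_of_shape_eq_add_cons (mem_permutitionsOn.1 hL).2
    simp [List.take_left' hu, List.drop_left' hu]
  · obtain ⟨T, σ, u⟩ := x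
    obtain ⟨-, hT, -, hK, hun, rfl⟩ := mem_tailSplits.1 hx
    obtain ⟨C, L', rfl, -, -⟩ := exists_eq_cons_of_shape_eq_cons hK
    have hu : u.length = i₁ := by rw [← hT, List.toFinset_card_of_nodup hun]
    simp [List.take_left' hu, List.drop_left' hu]
  · obtain ⟨hL, hK⟩ := mem_permutitionsOn.1 hL
    obtain ⟨u, C, L', rfl, hu, hC, -⟩ := exists_eq_append_cons_of_shape_eq_add_cons hK
    have hCne : C ≠ [] := List.ne_nil_of_length_pos (hC ▸ hi₂)
    have hun := ((IsPermutitionOn.cons_append_iff hCne).1 hL).1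
    simp only [List.headI_cons, List.tail_cons, List.take_left' hu, List.drop_left' hu, headLast]
    rw [sinv_cons, sinv_cons, List.getLastD_append_of_ne_nil u hCne, List.countP_append,
      hun.countP_eq_card_filter]
    ring

theorem QOn_cons_cons (q : R) (S : Finset ℕ) {i₁ : ℕ} (hi : 0 < i₁) (i₂ : ℕ) (J : List ℕ) :
    QOn q S (i₁ :: i₂ :: J) = ∑ T ∈ S.powersetCard i₁, ∑ σ ∈ permutitionsOn (S \ T) (i₂ :: J),
      (i₁ - 1).factorial * (∑ ℓ ∈ T with ℓ < headLast σ, q ^ #{x ∈ T | ℓ < x}) * q ^ sinv σ := by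
  rw [QOn_cons_cons_eq_sum_tailSplits q S hi, sum_filter, tailSplits, sum_sigma]
  refine sum_congr rfl fun T hT => ?_
  have hT : #T = i₁ := (mem_powersetCard.1 hT).2
  rw [sum_product]
  refine sum_congr rfl fun σ _ => ?_
  simp only [← ite_zero_mul]
  rw [← sum_mul, sum_orderings_getLastD (card_pos.1 (hT ▸ hi)) 0
    (fun ℓ => if ℓ < headLast σ then q ^ #{x ∈ T | ℓ < x} else 0), ← sum_filter, hT,
    nsmul_eq_mul]

theorem QOn_add_cons (q : R) (S : Finset ℕ) (i₁ : ℕ) {i₂ : ℕ} (hi₂ : 0 < i₂) (J : List ℕ) :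
    QOn q S ((i₁ + i₂) :: J) = ∑ T ∈ S.powersetCard i₁, ∑ σ ∈ permutitionsOn (S \ T) (i₂ :: J),
      i₁.factorial * q ^ #{x ∈ T | headLast σ < x} * q ^ sinv σ := by
  rw [QOn_add_cons_eq_sum_tailSplits q S i₁ hi₂, tailSplits, sum_sigma]
  refine sum_congr rfl fun T hT => ?_
  rw [sum_product]
  refine sum_congr rfl fun σ _ => ?_
  simp only [sum_const, card_orderings, (mem_powersetCard.1 hT).2, nsmul_eq_mul, mul_assoc]

end GeneratingSums

theorem factorial_div_mul_Q_sub_eq_sum (q : ℝ) {n k : ℕ} (hk : k ≤ n) (K : List ℕ) :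
    (n.factorial : ℝ) / (n - k).factorial * Q q (n - k) K =
      k.factorial * ∑ T ∈ (Icc 1 n).powersetCard k, QOn q (Icc 1 n \ T) K := by
  have hchoose : (n.factorial : ℝ) / (n - k).factorial = n.choose k * k.factorial := by
    rw [div_eq_iff (by positivity)]
    exact_mod_cast (Nat.choose_mul_factorial_mul_factorial hk).symm
  rw [sum_powersetCard_QOn_sdiff, Nat.card_Icc, Nat.add_sub_cancel, hchoose, Q_eq_QOn]
  ring

theorem sinv_generating_function_recursion_general
    (n i₁ i₂ : ℕ) (J : List ℕ) (h₁ : 0 < i₁) (h₂ : 0 < i₂)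
    (hsum : (i₁ :: i₂ :: J).sum = n) (q : ℝ) :
    q * i₁ * Q q n (i₁ :: i₂ :: J) + Q q n ((i₁ + i₂) :: J) =
      (i₁ : ℝ) * Q q n (i₁ :: i₂ :: J) +
        (Nat.factorial n : ℝ) / (Nat.factorial (n - i₁) : ℝ) * q ^ i₁ *
          Q q (n - i₁) (i₂ :: J) := by
  have hi₁n : i₁ ≤ n := by simp only [List.sum_cons] at hsum; omega
  rw [mul_right_comm _ (q ^ i₁), factorial_div_mul_Q_sub_eq_sum q hi₁n, Q_eq_QOn, Q_eq_QOn,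
    QOn_cons_cons q _ h₁, QOn_add_cons q _ i₁ h₂]
  simp only [QOn, mul_sum, sum_mul, ← sum_add_distrib]
  refine sum_congr rfl fun T hT => sum_congr rfl fun σ hσ => ?_
  obtain ⟨hσ, hK⟩ := mem_permutitionsOn.1 hσ
  have hb : headLast σ ∉ T :=
    (mem_sdiff.1 (hσ.headLast_mem (by rintro rfl; simp [shape] at hK))).2
  have key := sub_one_mul_sum_pow_card_gt_add_pow_card_gt T hb q
  rw [(mem_powersetCard.1 hT).2] at key
  have hfac : (i₁ : ℝ) * (i₁ - 1).factorial = i₁.factorial := by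
    exact_mod_cast Nat.mul_factorial_pred h₁.ne'
  simp only [← mul_sum, ← sum_mul]
  linear_combination (i₁.factorial * q ^ sinv σ) * key +
    ((q - 1) * (∑ ℓ ∈ T with ℓ < headLast σ, q ^ #{x ∈ T | ℓ < x}) * q ^ sinv σ) * hfac

/-- the generating functions `Q_I` satisfy
`q·i₁·Q_I(q) + Q_{(i₁+i₂,i₃,…,i_r)}(q) = i₁·Q_I(q) + (n!/(n−i₁)!)·q^{i₁}·Q_{(i₂,…,i_r)}(q)`. -/
theorem sinv_generating_function_recursion
    (n i₁ i₂ : ℕ) (J : List ℕ) (h₁ : 0 < i₁) (h₂ : 0 < i₂) (hJ : ∀ j ∈ J, 0 < j)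
    (hsum : (i₁ :: i₂ :: J).sum = n) (q : ℝ) :
    q * i₁ * Q q n (i₁ :: i₂ :: J) + Q q n ((i₁ + i₂) :: J) =
      (i₁ : ℝ) * Q q n (i₁ :: i₂ :: J) +
        (Nat.factorial n : ℝ) / (Nat.factorial (n - i₁) : ℝ) * q ^ i₁ *
          Q q (n - i₁) (i₂ :: J) :=
  sinv_generating_function_recursion_general n i₁ i₂ J h₁ h₂ hsum q
end

section
/- With S_n and T_n(q) defined in the free ℝ-algebra F as in the context, for every n ≥ 1 and every real number q one has T_n(q) = Σ_I (1−q^{i_1}) · [⋯[[Ψ_{i_1}, Ψ_{i_2}]_{q^{i_2}}, Ψ_{i_3}]_{q^{i_3}}, ⋯, Ψ_{i_r}]_{q^{i_r}} / (i_1 (i_1+i_2) ⋯ (i_1+⋯+i_r)), where the sum ranges over all compositions I = (i_1, …, i_r) of n and [a, b]_t denotes the t-bracket ab − t·ba in F (for r = 1 the iterated bracket is just Ψ_{i_1}). -/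
/-- The noncommutative complete symmetric functions `S_n` in the free `ℝ`-algebra on the
noncommutative power sums `Ψ_1, Ψ_2, …` (the generator `k` of `FreeAlgebra ℝ ℕ`
standing for `Ψ_k`), defined by `S_0 = 1` and `S_n = (1/n) Σ_{k=1}^n S_{n−k} Ψ_k`. -/
noncomputable def S : ℕ → FreeAlgebra ℝ ℕ
  | 0 => 1
  | n + 1 =>
      ((n + 1 : ℝ))⁻¹ • ∑ k ∈ Finset.range (n + 1), S (n - k) * FreeAlgebra.ι ℝ (k + 1)
  decreasing_by exact Nat.lt_succ_of_le (Nat.sub_le n k)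

/-- `T_n(q)`, the degree-`n` component of `σ_q^{-1} σ_1`, i.e. of `S_n((1−q)A)`:
determined by `T_0(q) = 1` and the recursion `S_n = Σ_{k=0}^n q^k S_k T_{n−k}(q)`,
here solved for `T_n(q)`. -/
noncomputable def T (q : ℝ) : ℕ → FreeAlgebra ℝ ℕ
  | 0 => 1
  | n + 1 =>
      S (n + 1) - ∑ k ∈ Finset.range (n + 1), q ^ (k + 1) • (S (k + 1) * T q (n - k))
  decreasing_by exact Nat.lt_succ_of_le (Nat.sub_le n k)

/-- `Ψ^I = Ψ_{i_1} Ψ_{i_2} ⋯ Ψ_{i_r}`. -/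
noncomputable def psi (I : List ℕ) : FreeAlgebra ℝ ℕ :=
  (I.map (FreeAlgebra.ι ℝ)).prod

/-- The `t`-bracket `[a, b]_t = ab − t·ba`. -/
noncomputable def qBracket (t : ℝ) (a b : FreeAlgebra ℝ ℕ) : FreeAlgebra ℝ ℕ :=
  a * b - t • (b * a)

/-- The iterated `q`-bracket
`[⋯[[Ψ_{i₁}, Ψ_{i₂}]_{q^{i₂}}, Ψ_{i₃}]_{q^{i₃}}, ⋯, Ψ_{i_r}]_{q^{i_r}}`
(for `r = 1` it is just `Ψ_{i₁}`). -/
noncomputable def iterBracket (q : ℝ) (i₁ : ℕ) (rest : List ℕ) : FreeAlgebra ℝ ℕ :=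
  rest.foldl (fun acc i => qBracket (q ^ i) acc (FreeAlgebra.ι ℝ i)) (FreeAlgebra.ι ℝ i₁)

/-- `π_u(I) = i_1 (i_1+i_2) ⋯ (i_1+⋯+i_r)`, the product of the partial sums of `I`. -/
def partialSumsProd (I : List ℕ) : ℕ :=
  ((List.range I.length).map fun k => (I.take (k + 1)).sum).prod

/-!
Write `σ_t = Σ tⁿ Sₙ xⁿ`, `ψ_t = Σ_{k ≥ 1} tᵏ Ψₖ xᵏ` and `τ = Σ Tₙ(q) xⁿ`. The recursion defining
`S` says `x σ_t' = σ_t ψ_t`, and the one defining `T` says `σ_1 = σ_q τ`. Applying `x d/dx` to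
`σ_q τ = σ_1` and cancelling the invertible series `σ_q` gives `x τ' = τ ψ_1 - ψ_q τ`, that is
`n Tₙ(q) = Σ_{k=1}^n [T_{n-k}(q), Ψₖ]_{qᵏ}`. Splitting off the last part of a composition shows that
the bracket sums over compositions satisfy the same recursion, which has a unique solution.
-/

open PowerSeries

section PowerSeries

variable {R : Type*} [Semiring R]

/-- The Euler operator `x d/dx`. -/
noncomputable def eulerDeriv (f : R⟦X⟧) : R⟦X⟧ :=
  PowerSeries.mk fun n => n • coeff n f

theorem coeff_eulerDeriv (n : ℕ) (f : R⟦X⟧) : coeff n (eulerDeriv f) = n • coeff n f :=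
  coeff_mk _ _

theorem eulerDeriv_mul (f g : R⟦X⟧) :
    eulerDeriv (f * g) = eulerDeriv f * g + f * eulerDeriv g := by
  ext n
  simp only [coeff_eulerDeriv, map_add, coeff_mul, Finset.smul_sum, ← Finset.sum_add_distrib]
  refine Finset.sum_congr rfl fun ⟨i, j⟩ hij => ?_
  rw [← Finset.HasAntidiagonal.mem_antidiagonal.mp hij, add_smul, smul_mul_assoc, mul_smul_comm]

theorem coeff_succ_mul_X_mul (f g : R⟦X⟧) (n : ℕ) :
    coeff (n + 1) (f * (X * g)) =
      ∑ k ∈ Finset.range (n + 1), coeff (n - k) f * coeff k g := by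
  rw [← mul_assoc, (commute_X f).eq, mul_assoc, coeff_succ_X_mul, coeff_mul,
    ← Finset.Nat.sum_antidiagonal_swap]
  simp only [Prod.fst_swap, Prod.snd_swap]
  rw [Finset.Nat.sum_antidiagonal_eq_sum_range_succ (fun i j => coeff j f * coeff i g)]

theorem coeff_succ_X_mul_mul (f g : R⟦X⟧) (n : ℕ) :
    coeff (n + 1) (X * g * f) =
      ∑ k ∈ Finset.range (n + 1), coeff k g * coeff (n - k) f := by
  rw [mul_assoc, coeff_succ_X_mul, coeff_mul,
    Finset.Nat.sum_antidiagonal_eq_sum_range_succ (fun i j => coeff i g * coeff j f)]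

end PowerSeries

local notation "Ψ" => FreeAlgebra.ι ℝ

theorem succ_smul_S (n : ℕ) :
    (n + 1 : ℝ) • S (n + 1) = ∑ k ∈ Finset.range (n + 1), S (n - k) * Ψ (k + 1) := by
  rw [S, smul_smul, mul_inv_cancel₀ (by positivity), one_smul]

theorem S_eq_sum_S_mul_T (q : ℝ) (n : ℕ) :
    S n = ∑ k ∈ Finset.range (n + 1), q ^ k • (S k * T q (n - k)) := by
  cases n with
  | zero => simp [S, T]
  | succ n =>
    rw [Finset.sum_range_succ', pow_zero, one_smul, Nat.sub_zero, S.eq_1, one_mul, T]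
    simp only [Nat.add_sub_add_right]
    abel

noncomputable def sigmaSeries (t : ℝ) : PowerSeries (FreeAlgebra ℝ ℕ) :=
  PowerSeries.mk fun n => t ^ n • S n

/-- `ψ_t = Σ_{k ≥ 1} t^k Ψ_k x^k`. -/
noncomputable def psiSeries (t : ℝ) : PowerSeries (FreeAlgebra ℝ ℕ) :=
  X * PowerSeries.mk fun k => t ^ (k + 1) • Ψ (k + 1)

noncomputable def tauSeries (q : ℝ) : PowerSeries (FreeAlgebra ℝ ℕ) :=
  PowerSeries.mk (T q)

theorem eulerDeriv_sigmaSeries (t : ℝ) :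
    eulerDeriv (sigmaSeries t) = sigmaSeries t * psiSeries t := by
  ext (_ | n)
  · simp [coeff_eulerDeriv, psiSeries, ← mul_assoc, (commute_X _).eq]
  rw [coeff_eulerDeriv, psiSeries, coeff_succ_mul_X_mul, ← Nat.cast_smul_eq_nsmul ℝ]
  simp only [sigmaSeries, coeff_mk]
  rw [smul_comm, Nat.cast_succ, succ_smul_S, Finset.smul_sum]
  refine Finset.sum_congr rfl fun k hk => ?_
  have hk : n - k + (k + 1) = n + 1 := by have := Finset.mem_range.mp hk; omega
  rw [smul_mul_smul_comm, ← pow_add, hk]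

theorem sigmaSeries_one_eq_mul (q : ℝ) : sigmaSeries 1 = sigmaSeries q * tauSeries q := by
  ext n
  rw [coeff_mul, Finset.Nat.sum_antidiagonal_eq_sum_range_succ
    (fun i j => coeff i (sigmaSeries q) * coeff j (tauSeries q))]
  simp only [sigmaSeries, tauSeries, coeff_mk, one_pow, one_smul, smul_mul_assoc]
  exact S_eq_sum_S_mul_T q n

theorem eulerDeriv_tauSeries (q : ℝ) :
    eulerDeriv (tauSeries q) = tauSeries q * psiSeries 1 - psiSeries q * tauSeries q := by
  have hunit : IsUnit (sigmaSeries q) :=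
    isUnit_iff_constantCoeff.mpr (by simp [← coeff_zero_eq_constantCoeff_apply, sigmaSeries, S])
  refine eq_sub_of_add_eq (hunit.mul_left_cancel ?_)
  calc sigmaSeries q * (eulerDeriv (tauSeries q) + psiSeries q * tauSeries q)
      = eulerDeriv (sigmaSeries q * tauSeries q) := by
        rw [eulerDeriv_mul, eulerDeriv_sigmaSeries]; noncomm_ring
    _ = sigmaSeries q * (tauSeries q * psiSeries 1) := by
        rw [← sigmaSeries_one_eq_mul, eulerDeriv_sigmaSeries, sigmaSeries_one_eq_mul q, mul_assoc]

def IsBracketRecursive (q : ℝ) (X : ℕ → FreeAlgebra ℝ ℕ) : Prop :=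
  X 0 = 1 ∧ ∀ n : ℕ, (n + 1 : ℝ) • X (n + 1) =
    ∑ k ∈ Finset.range (n + 1), qBracket (q ^ (k + 1)) (X (n - k)) (Ψ (k + 1))

theorem IsBracketRecursive.unique {q : ℝ} {X Y : ℕ → FreeAlgebra ℝ ℕ}
    (hX : IsBracketRecursive q X) (hY : IsBracketRecursive q Y) : X = Y := by
  funext n
  induction n using Nat.strong_induction_on with
  | _ n ih =>
    cases n with
    | zero => rw [hX.1, hY.1]
    | succ n =>
      refine smul_right_injective _ (by positivity : (n + 1 : ℝ) ≠ 0) ?_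
      simp only [hX.2, hY.2]
      refine Finset.sum_congr rfl fun k hk => ?_
      rw [ih (n - k) (by omega)]

theorem isBracketRecursive_T (q : ℝ) : IsBracketRecursive q (T q) := by
  refine ⟨by rw [T], fun n => ?_⟩
  have h := congrArg (coeff (n + 1)) (eulerDeriv_tauSeries q)
  rw [coeff_eulerDeriv, ← Nat.cast_smul_eq_nsmul ℝ, map_sub, psiSeries, psiSeries,
    coeff_succ_mul_X_mul, coeff_succ_X_mul_mul, ← Finset.sum_sub_distrib] at h
  simp only [tauSeries, coeff_mk, one_pow, one_smul, Nat.cast_succ] at h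
  rw [h]
  refine Finset.sum_congr rfl fun k _ => ?_
  rw [qBracket, smul_mul_assoc]

def compositions : ℕ → Finset (List ℕ)
  | 0 => {[]}
  | n + 1 => (Finset.range (n + 1)).biUnion fun k => (compositions (n - k)).image (· ++ [k + 1])
  decreasing_by exact Nat.lt_succ_of_le (Nat.sub_le n k)

theorem mem_compositions {n : ℕ} {I : List ℕ} :
    I ∈ compositions n ↔ (∀ i ∈ I, 0 < i) ∧ I.sum = n := by
  induction n using Nat.strong_induction_on generalizing I with
  | _ n ih =>
    cases n with
    | zero =>
      rw [compositions, Finset.mem_singleton]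
      constructor
      · rintro rfl
        simp
      · rintro ⟨hpos, hsum⟩
        cases I with
        | nil => rfl
        | cons a t =>
          have := hpos a List.mem_cons_self
          rw [List.sum_cons] at hsum
          omega
    | succ n =>
      rw [compositions]
      simp only [Finset.mem_biUnion, Finset.mem_range, Finset.mem_image]
      constructor
      · rintro ⟨k, hk, J, hJ, rfl⟩
        obtain ⟨hpos, hsum⟩ := (ih (n - k) (by omega)).mp hJ
        refine ⟨fun i hi => ?_, by rw [List.sum_append, List.sum_singleton]; omega⟩
        rcases List.mem_append.mp hi with hi | hi
        · exact hpos i hi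
        · rw [List.mem_singleton.mp hi]
          exact k.succ_pos
      · rintro ⟨hpos, hsum⟩
        obtain ⟨J, b, rfl⟩ := (List.eq_nil_or_concat I).resolve_left (by rintro rfl; simp at hsum)
        simp only [List.concat_eq_append, List.mem_append, List.mem_singleton, List.sum_append,
          List.sum_singleton] at hpos hsum ⊢
        have hb : 0 < b := hpos b (Or.inr rfl)
        refine ⟨b - 1, by omega, J, (ih _ (by omega)).mpr ⟨fun i hi => hpos i (Or.inl hi), ?_⟩, ?_⟩
        · omega
        · rw [Nat.sub_add_cancel hb]

theorem partialSumsProd_append_singleton (J : List ℕ) (k : ℕ) :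
    partialSumsProd (J ++ [k]) = partialSumsProd J * (J.sum + k) := by
  have hlast : (J ++ [k]).take (J.length + 1) = J ++ [k] := List.take_of_length_le (by simp)
  simp only [partialSumsProd, List.length_append, List.length_singleton, List.range_succ,
    List.map_append, List.prod_append, List.map_singleton, List.prod_singleton, hlast,
    List.sum_append, List.sum_singleton]
  congr 2
  refine List.map_congr_left fun j hj => ?_
  rw [List.take_append_of_le_length (by simpa using hj)]

theorem iterBracket_append_singleton (q : ℝ) (i : ℕ) (rest : List ℕ) (k : ℕ) :
    iterBracket q i (rest ++ [k]) = qBracket (q ^ k) (iterBracket q i rest) (Ψ k) := by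
  simp [iterBracket, List.foldl_append]

theorem qBracket_smul_left (t c : ℝ) (a b : FreeAlgebra ℝ ℕ) :
    qBracket t (c • a) b = c • qBracket t a b := by
  rw [qBracket, qBracket, smul_mul_assoc, mul_smul_comm, smul_comm t c, smul_sub]

theorem qBracket_sum_left {ι : Type*} (t : ℝ) (s : Finset ι) (f : ι → FreeAlgebra ℝ ℕ)
    (b : FreeAlgebra ℝ ℕ) : qBracket t (∑ x ∈ s, f x) b = ∑ x ∈ s, qBracket t (f x) b := by
  rw [qBracket, Finset.sum_mul, Finset.mul_sum, Finset.smul_sum, ← Finset.sum_sub_distrib]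
  rfl

/-- The empty composition gets `1 = T_0(q)`, so that the bracket sums satisfy the recursion of
`T_n(q)` from `n = 0` on. -/
noncomputable def bracketTerm (q : ℝ) : List ℕ → FreeAlgebra ℝ ℕ
  | [] => 1
  | i :: rest => ((1 - q ^ i) / partialSumsProd (i :: rest)) • iterBracket q i rest

theorem bracketTerm_append_singleton (q : ℝ) (J : List ℕ) (k : ℕ) :
    bracketTerm q (J ++ [k]) =
      ((J.sum + k : ℕ) : ℝ)⁻¹ • qBracket (q ^ k) (bracketTerm q J) (Ψ k) := by
  cases J with
  | nil =>
    simp [bracketTerm, partialSumsProd, iterBracket, qBracket, div_eq_inv_mul, mul_smul, sub_smul]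
  | cons i rest =>
    rw [List.cons_append, bracketTerm, bracketTerm, qBracket_smul_left, smul_smul,
      iterBracket_append_singleton, ← List.cons_append, partialSumsProd_append_singleton,
      Nat.cast_mul, div_mul_eq_div_div, div_eq_inv_mul _ (((i :: rest).sum + k : ℕ) : ℝ)]

noncomputable def bracketSum (q : ℝ) (n : ℕ) : FreeAlgebra ℝ ℕ :=
  ∑ I ∈ compositions n, bracketTerm q I

theorem compositions_succ_pairwiseDisjoint (n : ℕ) :
    (↑(Finset.range (n + 1)) : Set ℕ).PairwiseDisjoint
      fun k => (compositions (n - k)).image (· ++ [k + 1]) := by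
  intro k _ k' _ hne
  refine Finset.disjoint_left.mpr fun I hI hI' => hne ?_
  obtain ⟨J, -, rfl⟩ := Finset.mem_image.mp hI
  obtain ⟨J', -, hJ'⟩ := Finset.mem_image.mp hI'
  simpa using congrArg List.getLast? hJ'.symm

theorem isBracketRecursive_bracketSum (q : ℝ) : IsBracketRecursive q (bracketSum q) := by
  refine ⟨by simp [bracketSum, compositions, bracketTerm], fun n => ?_⟩
  have hterm : ∀ k ∈ Finset.range (n + 1), ∀ J ∈ compositions (n - k),
      bracketTerm q (J ++ [k + 1]) =
        (n + 1 : ℝ)⁻¹ • qBracket (q ^ (k + 1)) (bracketTerm q J) (Ψ (k + 1)) := by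
    intro k hk J hJ
    have hsum : J.sum + (k + 1) = n + 1 := by
      have := Finset.mem_range.mp hk; have := (mem_compositions.mp hJ).2; omega
    rw [bracketTerm_append_singleton, hsum, Nat.cast_succ]
  rw [bracketSum, compositions, Finset.sum_biUnion (compositions_succ_pairwiseDisjoint n),
    Finset.smul_sum]
  refine Finset.sum_congr rfl fun k hk => ?_
  rw [Finset.sum_image fun _ _ _ _ h => List.append_left_injective _ h,
    Finset.sum_congr rfl (hterm k hk), ← Finset.smul_sum, smul_smul,
    mul_inv_cancel₀ (by positivity), one_smul, bracketSum, qBracket_sum_left]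

/-- Every composition of `n ≥ 1` is nonempty, so `I.headD 1` is its first part `i₁` and `I.tail`
the list of its remaining parts. -/
theorem one_sub_q_transform_iterated_brackets (n : ℕ) (hn : 1 ≤ n) (q : ℝ) :
    T q n = ∑ᶠ I ∈ {I : List ℕ | (∀ i ∈ I, 0 < i) ∧ I.sum = n},
      ((1 - q ^ I.headD 1) / (partialSumsProd I : ℝ)) • iterBracket q (I.headD 1) I.tail := by
  have hset : {I : List ℕ | (∀ i ∈ I, 0 < i) ∧ I.sum = n} = ↑(compositions n) :=
    Set.ext fun _ => mem_compositions.symm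
  rw [hset, finsum_mem_coe_finset,
    (isBracketRecursive_T q).unique (isBracketRecursive_bracketSum q), bracketSum]
  refine Finset.sum_congr rfl fun I hI => ?_
  cases I with
  | nil =>
    have hsum := (mem_compositions.mp hI).2
    simp only [List.sum_nil] at hsum
    omega
  | cons i rest => rfl
end
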